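/- arXiv:2005.06322 — 5 statements merged into one kernel-verified Lean document; each statement's English description precedes it below -/
import Mathlib

section
/- For every weight function g : ℕ → [0,∞) with g(n) → ∞ and n/g(n) not tending to 0, and every unbounded modulus function f, there exists an infinite set A ⊆ ℕ such that lim_{n→∞} f(|A ∩ [1,n]|)/f(g(n)) = 0. In particular the ideal 𝒵_g(f) strictly contains the ideal Fin of finite sets. -/
open Filter Set

/-- A modulus function: nonnegative, vanishing exactly at 0, subadditive,
non-decreasing, right continuous at 0 (all on `[0,∞)`). -/
def IsModulus (f : ℝ → ℝ) : Prop :=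
  (∀ x : ℝ, 0 ≤ x → 0 ≤ f x) ∧
  (∀ x : ℝ, 0 ≤ x → (f x = 0 ↔ x = 0)) ∧
  (∀ x y : ℝ, 0 ≤ x → 0 ≤ y → f (x + y) ≤ f x + f y) ∧
  (∀ x y : ℝ, 0 ≤ x → x ≤ y → f x ≤ f y) ∧
  ContinuousWithinAt f (Set.Ici 0) 0

/-- An unbounded modulus function. -/
def IsUnboundedModulus (f : ℝ → ℝ) : Prop :=
  IsModulus f ∧ Tendsto f atTop atTop

/-- A weight function `g : ℕ → [0,∞)` with `g n → ∞` and `n / g n ↛ 0`. -/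
def IsWeight (g : ℕ → ℝ) : Prop :=
  (∀ n, 0 ≤ g n) ∧ Tendsto g atTop atTop ∧
  ¬ Tendsto (fun n : ℕ => (n : ℝ) / g n) atTop (nhds 0)

open scoped Classical in
/-- `|A ∩ [1,n]|`. -/
noncomputable def cnt (A : Set ℕ) (n : ℕ) : ℕ :=
  ((Finset.Icc 1 n).filter (fun m => m ∈ A)).card

/-- The ideal `𝒵_g(f)` of sets whose `f`-density of weight `g` is zero
(for nonnegative sequences, `limsup = 0` is equivalent to convergence to `0`). -/
noncomputable def Zd (f : ℝ → ℝ) (g : ℕ → ℝ) : Set (Set ℕ) :=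
  {A | Tendsto (fun n => f (cnt A n) / f (g n)) atTop (nhds 0)}

/-!
A finite set has bounded counting function, so its ratio is squeezed by `C / f(g n) → 0`.
For the infinite set, choose `s₀ < s₁ < ⋯` with `(k + 1) f(k + 1) ≤ f(g m)` for all `m ≥ sₖ`,
possible because `f ∘ g → ∞`, and take `A = {s₀, s₁, …}`. For `sₖ ≤ n < sₖ₊₁` at most `k + 1`
elements of `A` lie below `n`, so the ratio at `n` is at most
`f(k + 1) / ((k + 1) f(k + 1)) = 1 / (k + 1)`.
-/

namespace IsModulus

variable {f : ℝ → ℝ} (hf : IsModulus f) {x y : ℝ}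
include hf

theorem nonneg (hx : 0 ≤ x) : 0 ≤ f x := hf.1 x hx

theorem pos (hx : 0 < x) : 0 < f x :=
  (hf.nonneg hx.le).lt_of_ne' fun h => hx.ne' ((hf.2.1 x hx.le).1 h)

theorem mono (hx : 0 ≤ x) (hxy : x ≤ y) : f x ≤ f y := hf.2.2.2.1 x y hx hxy

end IsModulus

theorem cnt_le_card {A : Set ℕ} {n : ℕ} {t : Finset ℕ} (h : ∀ m ∈ A, m ≤ n → m ∈ t) :
    cnt A n ≤ t.card := by
  classical
  refine Finset.card_le_card fun m hm => ?_
  rw [Finset.mem_filter, Finset.mem_Icc] at hm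
  exact h m hm.2 hm.1.2

theorem cnt_range_le {s : ℕ → ℕ} (hs : StrictMono s) {n k : ℕ} (hn : n < s k) :
    cnt (range s) n ≤ k := by
  refine (cnt_le_card (t := (Finset.range k).image s) ?_).trans
    (Finset.card_image_le.trans_eq (Finset.card_range k))
  rintro _ ⟨j, rfl⟩ hj
  exact Finset.mem_image_of_mem s (Finset.mem_range.2 (hs.lt_iff_lt.1 (hj.trans_lt hn)))

theorem StrictMono.exists_le_lt_succ {s : ℕ → ℕ} (hs : StrictMono s) {K n : ℕ} (hK : s K ≤ n) :
    ∃ k, K ≤ k ∧ s k ≤ n ∧ n < s (k + 1) := by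
  classical
  have hex : ∃ j, n < s j := ⟨n + 1, Nat.lt_of_lt_of_le n.lt_succ_self hs.le_apply⟩
  have hK_lt : K < Nat.find hex := by
    by_contra! h
    exact (Nat.find_spec hex).not_ge ((hs.monotone h).trans hK)
  obtain ⟨k, hk⟩ := Nat.exists_eq_add_of_lt hK_lt
  refine ⟨K + k, Nat.le_add_right K k, ?_, hk ▸ Nat.find_spec hex⟩
  exact not_lt.1 (Nat.find_min hex (by omega))

theorem tendsto_nhds_zero_of_forall_eventually_le {u : ℕ → ℝ} (h0 : ∀ᶠ n in atTop, 0 ≤ u n)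
    (h : ∀ ε > 0, ∀ᶠ n in atTop, u n ≤ ε) : Tendsto u atTop (nhds 0) :=
  tendsto_order.2 ⟨fun _ ha => h0.mono fun _ hn => ha.trans_le hn,
    fun a ha => (h (a / 2) (half_pos ha)).mono fun _ hn => hn.trans_lt (half_lt_self ha)⟩

section

variable {f : ℝ → ℝ} {g : ℕ → ℝ} (hf : IsModulus f) (hF : Tendsto (fun n => f (g n)) atTop atTop)
include hf hF

theorem mem_Zd_of_forall_eventually_le {A : Set ℕ}
    (h : ∀ ε > 0, ∀ᶠ n in atTop, f (cnt A n) / f (g n) ≤ ε) : A ∈ Zd f g :=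
  tendsto_nhds_zero_of_forall_eventually_le
    ((hF.eventually_gt_atTop 0).mono fun _ hn => div_nonneg (hf.nonneg (Nat.cast_nonneg _)) hn.le) h

theorem Set.Finite.mem_Zd {A : Set ℕ} (hA : A.Finite) : A ∈ Zd f g := by
  refine mem_Zd_of_forall_eventually_le hf hF fun ε hε => ?_
  have hlim : Tendsto (fun n => f (hA.toFinset.card) / f (g n)) atTop (nhds 0) :=
    tendsto_const_nhds.div_atTop hF
  filter_upwards [hlim.eventually (ge_mem_nhds hε), hF.eventually_gt_atTop 0] with n hn hpos
  refine le_trans (div_le_div_of_nonneg_right (hf.mono (Nat.cast_nonneg _) ?_) hpos.le) hn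
  exact_mod_cast cnt_le_card fun m hm _ => hA.mem_toFinset.2 hm

theorem exists_infinite_mem_Zd : ∃ A : Set ℕ, A.Infinite ∧ A ∈ Zd f g := by
  obtain ⟨s, hs, hsF⟩ : ∃ s : ℕ → ℕ, StrictMono s ∧
      ∀ k, ∀ m ≥ s k, ((k : ℝ) + 1) * f ((k : ℝ) + 1) ≤ f (g m) :=
    extraction_forall_of_eventually fun k =>
      eventually_forall_ge_atTop.2 (hF.eventually_ge_atTop _)
  refine ⟨range s, infinite_range_of_injective hs.injective,
    mem_Zd_of_forall_eventually_le hf hF fun ε hε => ?_⟩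
  obtain ⟨K, hK⟩ := exists_nat_one_div_lt hε
  filter_upwards [eventually_ge_atTop (s K)] with n hn
  obtain ⟨k, hKk, hkn, hnk⟩ := hs.exists_le_lt_succ hn
  have hpos : 0 < f ((k : ℝ) + 1) := hf.pos (by positivity)
  have hcnt : f (cnt (range s) n) ≤ f ((k : ℝ) + 1) :=
    hf.mono (Nat.cast_nonneg _) (by exact_mod_cast cnt_range_le hs hnk)
  calc f (cnt (range s) n) / f (g n)
      ≤ f ((k : ℝ) + 1) / (((k : ℝ) + 1) * f ((k : ℝ) + 1)) :=
        div_le_div₀ hpos.le hcnt (by positivity) (hsF k n hkn)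
    _ = 1 / ((k : ℝ) + 1) := by field_simp
    _ ≤ 1 / ((K : ℝ) + 1) := by gcongr
    _ ≤ ε := hK.le

end

theorem stmt0 (g : ℕ → ℝ) (hg : IsWeight g) (f : ℝ → ℝ) (hf : IsUnboundedModulus f) :
    (∀ A : Set ℕ, A.Finite → A ∈ Zd f g) ∧
    ∃ A : Set ℕ, A.Infinite ∧ A ∈ Zd f g := by
  have hF : Tendsto (fun n => f (g n)) atTop atTop := hf.2.comp hg.2.1
  exact ⟨fun _ hA => hA.mem_Zd hf.1 hF, exists_infinite_mem_Zd hf.1 hF⟩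
end

section
/- For any unbounded modulus function f and any weight function g with g(n) → ∞ and n/g(n) ↛ 0, the ideal 𝒵_g(f) is tall (dense): every infinite set A ⊆ ℕ contains an infinite subset B with upper f-density of weight g equal to 0. -/
open Filter Set

/-!
Since `f ∘ g → ∞`, for each `j` there is a threshold `N j` beyond which
`f (g n) ≥ j (1 + f j)`. Enumerate `B ⊆ A` so sparsely that its `(m+1)`-st element lies
beyond `N (m+1)`. Then `j = |B ∩ [1,n]| ≥ 1` forces `n ≥ N j`, so `f j / f (g n) ≤ 1 / j`;
combined with the monotonicity of `f` this gives `f j / f (g n) ≤ 1 / k` as soon as `n ≥ N k`.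
-/

open Topology

lemma exists_strictMono_mem_of_infinite {A : Set ℕ} (hA : A.Infinite) (N : ℕ → ℕ) :
    ∃ b : ℕ → ℕ, StrictMono b ∧ ∀ m, b m ∈ A ∧ N m ≤ b m :=
  extraction_forall_of_frequently fun m =>
    (Nat.frequently_atTop_iff_infinite (p := (· ∈ A)) |>.2 hA).and_eventually
      (eventually_ge_atTop (N m))

lemma cnt_range_le_of_lt {b : ℕ → ℕ} (hb : StrictMono b) {n m : ℕ} (h : n < b m) :
    cnt (range b) n ≤ m := by
  calc cnt (range b) n ≤ ((Finset.range m).image b).card := by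
        unfold cnt
        refine Finset.card_le_card fun x hx => ?_
        simp only [Finset.mem_filter, Finset.mem_Icc, mem_range] at hx
        obtain ⟨⟨-, hxn⟩, i, rfl⟩ := hx
        exact Finset.mem_image_of_mem b (Finset.mem_range.2 (hb.lt_iff_lt.1 (hxn.trans_lt h)))
    _ ≤ m := Finset.card_image_le.trans (Finset.card_range m).le

lemma le_of_one_le_cnt_range {b N : ℕ → ℕ} (hb : StrictMono b) (hN : ∀ m, N (m + 1) ≤ b m)
    {n : ℕ} (h : 1 ≤ cnt (range b) n) : N (cnt (range b) n) ≤ n := by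
  obtain ⟨m, hm⟩ : ∃ m, cnt (range b) n = m + 1 := ⟨_, (Nat.sub_add_cancel h).symm⟩
  rw [hm]
  refine (hN m).trans (not_lt.1 fun hlt => ?_)
  have := cnt_range_le_of_lt hb hlt
  omega

lemma tendsto_div_zero_of_le_threshold {F u : ℕ → ℝ} (hF0 : ∀ j, 0 ≤ F j)
    (hF : Monotone F) {N c : ℕ → ℕ} (hN : ∀ j n, N j ≤ n → j * (1 + F j) ≤ u n)
    (hc : ∀ n, 1 ≤ c n → N (c n) ≤ n) :
    Tendsto (fun n => F (c n) / u n) atTop (𝓝 0) := by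
  have hbound : ∀ k : ℕ, 1 ≤ k → ∀ n, N k ≤ n → k * (1 + F (c n)) ≤ u n := by
    intro k hk n hn
    rcases le_total (c n) k with hck | hkc
    · calc (k : ℝ) * (1 + F (c n)) ≤ k * (1 + F k) := by gcongr; exact hF hck
        _ ≤ u n := hN k n hn
    · calc (k : ℝ) * (1 + F (c n)) ≤ c n * (1 + F (c n)) := by
            gcongr
            linarith [hF0 (c n)]
        _ ≤ u n := hN _ n (hc n (hk.trans hkc))
  rw [Metric.tendsto_atTop]
  intro ε hε
  obtain ⟨k, hk⟩ := exists_nat_one_div_lt hε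
  refine ⟨N (k + 1), fun n hn => ?_⟩
  have hu := hbound (k + 1) k.succ_pos n hn
  push_cast at hu
  have hFc := hF0 (c n)
  have hupos : 0 < u n := by nlinarith
  have hratio : F (c n) / u n ≤ 1 / (k + 1) := by
    rw [div_le_div_iff₀ hupos (by positivity)]
    nlinarith
  rw [Real.dist_eq, sub_zero, abs_of_nonneg (div_nonneg hFc hupos.le)]
  exact hratio.trans_lt hk

theorem stmt2 (f : ℝ → ℝ) (hf : IsUnboundedModulus f) (g : ℕ → ℝ) (hg : IsWeight g) :
    ∀ A : Set ℕ, A.Infinite → ∃ B ⊆ A, B.Infinite ∧ B ∈ Zd f g := by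
  intro A hA
  obtain ⟨⟨hf0, -, -, hfmono, -⟩, hfu⟩ := hf
  have hthreshold : ∀ j : ℕ, ∃ N, ∀ n ≥ N, (j : ℝ) * (1 + f j) ≤ f (g n) := fun j =>
    eventually_atTop.1 ((hfu.comp hg.2.1).eventually_ge_atTop _)
  choose N hN using hthreshold
  obtain ⟨b, hb, hbA⟩ := exists_strictMono_mem_of_infinite hA fun m => N (m + 1)
  refine ⟨range b, range_subset_iff.2 fun m => (hbA m).1,
    infinite_range_of_injective hb.injective, ?_⟩
  exact tendsto_div_zero_of_le_threshold (F := fun j : ℕ => f j)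
    (fun j => hf0 _ j.cast_nonneg)
    (fun i j hij => hfmono _ _ i.cast_nonneg (Nat.cast_le.2 hij)) hN
    (fun _ h => le_of_one_le_cnt_range hb (fun m => (hbA m).2) h)
end

section
/- For every unbounded modulus function f there exists a weight function g such that 𝒵_g(f) and 𝒵(f) are incomparable: there exist sets A ∈ 𝒵_g(f) \ 𝒵(f) and B ∈ 𝒵(f) \ 𝒵_g(f). -/
/-!
Cut `ℕ` into blocks `(s k, s (k+1)]` and choose a tail length `m k ≤ s (k+1) - s k` with
`f (m k) ≥ (k+1) f (s k)` and `f (s (k+1)) ≥ (k+1) f (m k)`. On block `k` the weight is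
`g = m (k+1)`, so `f (g n) ≥ (k+1) f n`, except at the right endpoint of an odd block, where it
drops to `m k`. The union `A` of the even blocks fills almost all of `[1, s (k+1)]` in `f`-size
for even `k`, so `A ∉ 𝒵(f)`; but where `g` is small, `A` has not grown since `s k`, so
`A ∈ 𝒵_g(f)`. The union `B` of the tails of the odd blocks meets `[1, s (k+1)]` in at least
`m k = g (s (k+1))` points for odd `k`, so `B ∉ 𝒵_g(f)`, while subadditivity gives
`k · f |B ∩ [1, n]| ≤ 2 f n` on block `k`, so `B ∈ 𝒵(f)`.
-/

open Filter Set

open Topology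

section

open scoped Classical

lemma cnt_eq_add_card_Ioc (X : Set ℕ) {a b : ℕ} (hab : a ≤ b) :
    cnt X b = cnt X a + ((Finset.Ioc a b).filter (· ∈ X)).card := by
  rw [cnt, cnt, ← Finset.card_union_of_disjoint, ← Finset.filter_union]
  · have hIcc (n : ℕ) : Finset.Icc 1 n = Finset.Ioc 0 n := Finset.Icc_succ_left_eq_Ioc 0 n
    rw [hIcc, hIcc, Finset.Ioc_union_Ioc_eq_Ioc (Nat.zero_le a) hab]
  · exact Finset.disjoint_filter_filter (Finset.Ioc_disjoint_Ioc_of_le le_rfl)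

lemma cnt_le (X : Set ℕ) (n : ℕ) : cnt X n ≤ n :=
  (Finset.card_filter_le _ _).trans (by simp)

lemma cnt_le_cnt_add (X : Set ℕ) {a b : ℕ} (hab : a ≤ b) : cnt X b ≤ cnt X a + (b - a) := by
  rw [cnt_eq_add_card_Ioc X hab, ← Nat.card_Ioc]
  exact Nat.add_le_add_left (Finset.card_filter_le _ _) _

lemma cnt_le_of_forall_notMem {X : Set ℕ} {a b : ℕ} (hab : a ≤ b)
    (h : ∀ x, a < x → x ≤ b → x ∉ X) : cnt X b ≤ cnt X a := by
  rw [cnt_eq_add_card_Ioc X hab, Finset.filter_false_of_mem fun x hx =>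
    h x (Finset.mem_Ioc.1 hx).1 (Finset.mem_Ioc.1 hx).2]
  simp

lemma sub_le_cnt_of_forall_mem {X : Set ℕ} {a b : ℕ} (hab : a ≤ b)
    (h : ∀ x, a < x → x ≤ b → x ∈ X) : b - a ≤ cnt X b := by
  rw [cnt_eq_add_card_Ioc X hab, Finset.filter_true_of_mem fun x hx =>
    h x (Finset.mem_Ioc.1 hx).1 (Finset.mem_Ioc.1 hx).2]
  simp

end

lemma not_tendsto_nhds_zero_of_subseq {a : ℕ → ℝ} {u : ℕ → ℕ} (hu : Tendsto u atTop atTop)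
    {c : ℝ} (hc : 0 < c) (h : ∀ j, c ≤ a (u j)) : ¬Tendsto a atTop (𝓝 0) := fun ha => by
  obtain ⟨j, hj⟩ := ((ha.comp hu).eventually (eventually_lt_nhds hc)).exists
  exact (h j).not_gt hj

lemma tendsto_div_nhds_zero_of_mul_le {a b : ℕ → ℝ} {κ : ℕ → ℕ} (hκ : Tendsto κ atTop atTop)
    {C : ℝ} (hC : 0 ≤ C) (ha : ∀ n, 0 ≤ a n) (hb : ∀ n, 0 ≤ b n)
    (h : ∀ᶠ n in atTop, κ n * a n ≤ C * b n) :
    Tendsto (fun n => a n / b n) atTop (𝓝 0) := by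
  refine squeeze_zero' (Eventually.of_forall fun n => div_nonneg (ha n) (hb n)) ?_
    ((tendsto_const_div_atTop_nhds_zero_nat C).comp hκ)
  filter_upwards [h, hκ.eventually_gt_atTop 0] with n hn hκn
  have hκn' : (0 : ℝ) < κ n := Nat.cast_pos.2 hκn
  rcases (hb n).eq_or_lt with hbn | hbn
  · rw [← hbn, div_zero]
    exact div_nonneg hC hκn'.le
  · rw [Function.comp_apply, le_div_iff₀ hκn', div_mul_eq_mul_div, div_le_iff₀ hbn]
    linarith

/-- Block `k` is the interval `(s k, s (k + 1)]`, and its last `m k` elements form its tail. -/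
structure BlockData (φ : ℕ → ℝ) where
  s : ℕ → ℕ
  m : ℕ → ℕ
  s_zero : s 0 = 0
  s_le_m : ∀ k, s k ≤ m k
  s_add_m_lt : ∀ k, s k + m k < s (k + 1)
  m_large : ∀ k : ℕ, ((k : ℝ) + 1) * φ (s k) ≤ φ (m k)
  s_large : ∀ k : ℕ, ((k : ℝ) + 1) * φ (m k) ≤ φ (s (k + 1))

lemma BlockData.nonempty {φ : ℕ → ℝ} (hφ : Tendsto φ atTop atTop) : Nonempty (BlockData φ) := by
  have step (k a : ℕ) : ∃ m b : ℕ, a ≤ m ∧ a + m < b ∧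
      ((k : ℝ) + 1) * φ a ≤ φ m ∧ ((k : ℝ) + 1) * φ m ≤ φ b := by
    obtain ⟨m, hm, ham⟩ :=
      ((hφ.eventually_ge_atTop (((k : ℝ) + 1) * φ a)).and (eventually_ge_atTop a)).exists
    obtain ⟨b, hb, hmb⟩ :=
      ((hφ.eventually_ge_atTop (((k : ℝ) + 1) * φ m)).and (eventually_gt_atTop (a + m))).exists
    exact ⟨m, b, ham, hmb, hm, hb⟩
  choose M S hle hlt hM hS using step
  let s : ℕ → ℕ := fun k => Nat.rec (motive := fun _ => ℕ) 0 (fun k sk => S k sk) k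
  exact ⟨{ s := s, m := fun k => M k (s k), s_zero := rfl
           s_le_m := fun k => hle k (s k), s_add_m_lt := fun k => hlt k (s k)
           m_large := fun k => hM k (s k), s_large := fun k => hS k (s k) }⟩

namespace BlockData

variable {φ : ℕ → ℝ} (D : BlockData φ)

lemma strictMono_s : StrictMono D.s :=
  strictMono_nat_of_lt_succ fun k => by have := D.s_add_m_lt k; omega

lemma m_lt_s_succ (k : ℕ) : D.m k < D.s (k + 1) := by have := D.s_add_m_lt k; omega

lemma s_pos {k : ℕ} (hk : 0 < k) : 0 < D.s k := D.s_zero ▸ D.strictMono_s hk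

lemma exists_le_s_succ (n : ℕ) : ∃ k, n ≤ D.s (k + 1) :=
  ⟨n, (D.strictMono_s.id_le n).trans (D.strictMono_s.monotone n.le_succ)⟩

def idx (n : ℕ) : ℕ := Nat.find (D.exists_le_s_succ n)

lemma le_s_idx_succ (n : ℕ) : n ≤ D.s (D.idx n + 1) := Nat.find_spec (D.exists_le_s_succ n)

lemma idx_eq {k n : ℕ} (h₁ : D.s k < n) (h₂ : n ≤ D.s (k + 1)) : D.idx n = k := by
  refine le_antisymm (Nat.find_min' _ h₂) (not_lt.1 fun hlt => ?_)
  have := D.strictMono_s.monotone (show D.idx n + 1 ≤ k from hlt)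
  have := D.le_s_idx_succ n
  omega

lemma idx_s_succ (k : ℕ) : D.idx (D.s (k + 1)) = k :=
  D.idx_eq (D.strictMono_s k.lt_succ_self) le_rfl

lemma s_idx_lt {n : ℕ} (hn : 0 < n) : D.s (D.idx n) < n := by
  rcases h : D.idx n with _ | k
  · rwa [D.s_zero]
  · have := Nat.find_min (D.exists_le_s_succ n) (h ▸ k.lt_succ_self : k < D.idx n)
    omega

lemma tendsto_idx : Tendsto D.idx atTop atTop := by
  refine tendsto_atTop_atTop.2 fun k => ⟨D.s k + 1, fun n hn => not_lt.1 fun hlt => ?_⟩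
  have := D.strictMono_s.monotone (show D.idx n + 1 ≤ k from hlt)
  have := D.le_s_idx_succ n
  omega

lemma tendsto_s_two_mul_add (c : ℕ) : Tendsto (fun j => D.s (2 * j + c)) atTop atTop :=
  D.strictMono_s.tendsto_atTop.comp (tendsto_atTop_atTop.2 fun b => ⟨b, fun j hj => by omega⟩)

def weight (n : ℕ) : ℕ :=
  if Odd (D.idx n) ∧ n = D.s (D.idx n + 1) then D.m (D.idx n) else D.m (D.idx n + 1)

def evenBlocks : Set ℕ := {n | Even (D.idx n)}

def oddTails : Set ℕ := {n | Odd (D.idx n) ∧ D.s (D.idx n + 1) < n + D.m (D.idx n)}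

lemma weight_s_succ {k : ℕ} (hk : Odd k) : D.weight (D.s (k + 1)) = D.m k := by
  simp [weight, D.idx_s_succ, hk]

lemma s_idx_le_weight (n : ℕ) : D.s (D.idx n) ≤ D.weight n := by
  unfold weight
  split_ifs
  · exact D.s_le_m _
  · exact (D.strictMono_s.monotone (Nat.le_succ _)).trans (D.s_le_m _)

lemma isWeight : IsWeight fun n => (D.weight n : ℝ) := by
  refine ⟨fun n => Nat.cast_nonneg _, tendsto_natCast_atTop_atTop.comp <|
    tendsto_atTop_mono D.s_idx_le_weight (D.strictMono_s.tendsto_atTop.comp D.tendsto_idx), ?_⟩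
  refine not_tendsto_nhds_zero_of_subseq (D.tendsto_s_two_mul_add 2) one_pos fun j => ?_
  have hm : 0 < D.m (2 * j + 1) := (D.s_pos (by omega)).trans_le (D.s_le_m _)
  show 1 ≤ (D.s (2 * j + 1 + 1) : ℝ) / D.weight (D.s (2 * j + 1 + 1))
  rw [D.weight_s_succ (odd_two_mul_add_one j), one_le_div (by exact_mod_cast hm)]
  exact_mod_cast (D.m_lt_s_succ _).le

lemma cnt_evenBlocks_s_succ_le {k : ℕ} (hk : Odd k) :
    cnt D.evenBlocks (D.s (k + 1)) ≤ D.s k := by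
  refine (cnt_le_of_forall_notMem (D.strictMono_s k.lt_succ_self).le fun x h₁ h₂ => ?_).trans
    (cnt_le _ _)
  simpa [evenBlocks, D.idx_eq h₁ h₂] using hk

lemma s_succ_sub_le_cnt_evenBlocks {k : ℕ} (hk : Even k) :
    D.s (k + 1) - D.s k ≤ cnt D.evenBlocks (D.s (k + 1)) :=
  sub_le_cnt_of_forall_mem (D.strictMono_s k.lt_succ_self).le fun x h₁ h₂ => by
    simpa [evenBlocks, D.idx_eq h₁ h₂] using hk

lemma m_le_cnt_oddTails {k : ℕ} (hk : Odd k) : D.m k ≤ cnt D.oddTails (D.s (k + 1)) := by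
  have hm := D.s_add_m_lt k
  have := sub_le_cnt_of_forall_mem (X := D.oddTails) (Nat.sub_le (D.s (k + 1)) (D.m k))
    fun x h₁ h₂ => by
      have hx := D.idx_eq (show D.s k < x by omega) h₂
      refine ⟨hx ▸ hk, ?_⟩
      rw [hx]
      omega
  omega

lemma cnt_oddTails_le_cnt_s {k n : ℕ} (h₁ : D.s k < n) (h₂ : n + D.m k ≤ D.s (k + 1)) :
    cnt D.oddTails n ≤ cnt D.oddTails (D.s k) :=
  cnt_le_of_forall_notMem h₁.le fun x hx₁ hx₂ hx => by
    have := hx.2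
    rw [D.idx_eq hx₁ (by omega)] at this
    omega

lemma cnt_oddTails_le {k n : ℕ} (h₁ : D.s k < n) (h₂ : n ≤ D.s (k + 1)) :
    cnt D.oddTails n ≤ D.s k + D.m k := by
  have hm := D.s_add_m_lt k
  have hcut := cnt_oddTails_le_cnt_s D (k := k) (n := min n (D.s (k + 1) - D.m k))
    (by omega) (by omega)
  have := cnt_le_cnt_add D.oddTails (min_le_left n (D.s (k + 1) - D.m k))
  have := cnt_le D.oddTails (D.s k)
  omega

lemma idx_add_one_mul_cnt_evenBlocks_le_weight (hmono : Monotone φ) (hnn : ∀ n, 0 ≤ φ n) (n : ℕ) :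
    ((D.idx n : ℝ) + 1) * φ (cnt D.evenBlocks n) ≤ φ (D.weight n) := by
  unfold weight
  split_ifs with h
  · have hcnt := D.cnt_evenBlocks_s_succ_le h.1
    rw [← h.2] at hcnt
    exact (mul_le_mul_of_nonneg_left (hmono hcnt) (by positivity)).trans (D.m_large _)
  · have hcnt : cnt D.evenBlocks n ≤ D.s (D.idx n + 1) := (cnt_le _ n).trans (D.le_s_idx_succ n)
    have := D.m_large (D.idx n + 1)
    push_cast at this
    nlinarith [hmono hcnt, hnn (D.s (D.idx n + 1))]

lemma tendsto_cnt_evenBlocks_div_weight (hmono : Monotone φ) (hnn : ∀ n, 0 ≤ φ n) :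
    Tendsto (fun n => φ (cnt D.evenBlocks n) / φ (D.weight n)) atTop (𝓝 0) :=
  tendsto_div_nhds_zero_of_mul_le ((tendsto_add_atTop_nat 1).comp D.tendsto_idx) zero_le_one
    (fun _ => hnn _) (fun _ => hnn _) <| Eventually.of_forall fun n => by
      simpa using D.idx_add_one_mul_cnt_evenBlocks_le_weight hmono hnn n

lemma half_le_cnt_evenBlocks_div (hmono : Monotone φ) (hsub : ∀ a b, φ (a + b) ≤ φ a + φ b)
    (hnn : ∀ n, 0 ≤ φ n) (hpos : ∀ n, 0 < n → 0 < φ n) {k : ℕ} (hk : Even k) (hk₀ : 0 < k) :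
    1 / 2 ≤ φ (cnt D.evenBlocks (D.s (k + 1))) / φ (D.s (k + 1)) := by
  have hcnt := D.s_succ_sub_le_cnt_evenBlocks hk
  have hsplit : φ (D.s (k + 1)) ≤ φ (cnt D.evenBlocks (D.s (k + 1))) + φ (D.s k) := by
    calc φ (D.s (k + 1)) = φ (D.s (k + 1) - D.s k + D.s k) := by
          rw [Nat.sub_add_cancel (D.strictMono_s k.lt_succ_self).le]
      _ ≤ φ (D.s (k + 1) - D.s k) + φ (D.s k) := hsub _ _
      _ ≤ _ := by gcongr; exact hmono hcnt
  have hk₁ : (1 : ℝ) ≤ k := by exact_mod_cast hk₀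
  have := D.s_large k
  have := hmono (D.s_le_m k)
  rw [div_le_div_iff₀ two_pos (hpos _ (D.s_pos k.succ_pos))]
  nlinarith [hnn (D.m k)]

lemma not_tendsto_cnt_evenBlocks_div (hmono : Monotone φ)
    (hsub : ∀ a b, φ (a + b) ≤ φ a + φ b) (hnn : ∀ n, 0 ≤ φ n) (hpos : ∀ n, 0 < n → 0 < φ n) :
    ¬Tendsto (fun n => φ (cnt D.evenBlocks n) / φ n) atTop (𝓝 0) :=
  not_tendsto_nhds_zero_of_subseq (D.tendsto_s_two_mul_add 3) (by norm_num : (0 : ℝ) < 1 / 2)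
    fun j =>
      D.half_le_cnt_evenBlocks_div (k := 2 * j + 2) hmono hsub hnn hpos (by simp [parity_simps])
        (by omega)

lemma cnt_oddTails_le_two_mul (hmono : Monotone φ) (hsub : ∀ a b, φ (a + b) ≤ φ a + φ b)
    {k n : ℕ} (h₁ : D.s k < n) (h₂ : n ≤ D.s (k + 1)) :
    φ (cnt D.oddTails n) ≤ 2 * φ (D.m k) := by
  calc φ (cnt D.oddTails n) ≤ φ (D.s k + D.m k) := hmono (D.cnt_oddTails_le h₁ h₂)
    _ ≤ φ (D.s k) + φ (D.m k) := hsub _ _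
    _ ≤ 2 * φ (D.m k) := by linarith [hmono (D.s_le_m k)]

lemma mul_cnt_oddTails_le (hmono : Monotone φ) (hsub : ∀ a b, φ (a + b) ≤ φ a + φ b)
    (hnn : ∀ n, 0 ≤ φ n) {k n : ℕ} (h₁ : D.s k < n) (h₂ : n ≤ D.s (k + 1)) :
    (k : ℝ) * φ (cnt D.oddTails n) ≤ 2 * φ n := by
  by_cases hn : n + D.m k ≤ D.s (k + 1)
  · rcases k with _ | j
    · simpa using hnn n
    have hcnt := hmono (D.cnt_oddTails_le_cnt_s h₁ hn)
    have hprev := D.cnt_oddTails_le_two_mul hmono hsub (D.strictMono_s j.lt_succ_self) le_rfl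
    have := D.s_large j
    have := hmono h₁.le
    push_cast
    nlinarith [hnn (D.m j)]
  · have hsplit : φ (D.s (k + 1)) ≤ φ n + φ (D.m k) :=
      (hmono (by omega : D.s (k + 1) ≤ n + D.m k)).trans (hsub _ _)
    have := D.cnt_oddTails_le_two_mul hmono hsub h₁ h₂
    have := D.s_large k
    nlinarith [k.cast_nonneg (α := ℝ), hnn (D.m k)]

lemma tendsto_cnt_oddTails_div (hmono : Monotone φ) (hsub : ∀ a b, φ (a + b) ≤ φ a + φ b)
    (hnn : ∀ n, 0 ≤ φ n) :
    Tendsto (fun n => φ (cnt D.oddTails n) / φ n) atTop (𝓝 0) :=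
  tendsto_div_nhds_zero_of_mul_le D.tendsto_idx zero_le_two (fun _ => hnn _) hnn <|
    (eventually_gt_atTop 0).mono fun _ hn =>
      D.mul_cnt_oddTails_le hmono hsub hnn (D.s_idx_lt hn) (D.le_s_idx_succ _)

lemma one_le_cnt_oddTails_div_weight (hmono : Monotone φ) (hpos : ∀ n, 0 < n → 0 < φ n)
    {k : ℕ} (hk : Odd k) :
    1 ≤ φ (cnt D.oddTails (D.s (k + 1))) / φ (D.weight (D.s (k + 1))) := by
  rw [D.weight_s_succ hk, one_le_div (hpos _ ((D.s_pos hk.pos).trans_le (D.s_le_m k)))]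
  exact hmono (D.m_le_cnt_oddTails hk)

lemma not_tendsto_cnt_oddTails_div_weight (hmono : Monotone φ) (hpos : ∀ n, 0 < n → 0 < φ n) :
    ¬Tendsto (fun n => φ (cnt D.oddTails n) / φ (D.weight n)) atTop (𝓝 0) :=
  not_tendsto_nhds_zero_of_subseq (D.tendsto_s_two_mul_add 2) one_pos fun j =>
      D.one_le_cnt_oddTails_div_weight (k := 2 * j + 1) hmono hpos (by simp)

end BlockData

namespace IsModulus

variable {f : ℝ → ℝ}

lemma monotone_natCast (hf : IsModulus f) : Monotone fun n : ℕ => f n :=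
  fun _ _ h => hf.2.2.2.1 _ _ (Nat.cast_nonneg _) (Nat.cast_le.2 h)

lemma natCast_add_le (hf : IsModulus f) (a b : ℕ) : f ((a + b : ℕ) : ℝ) ≤ f a + f b := by
  push_cast
  exact hf.2.2.1 _ _ (Nat.cast_nonneg _) (Nat.cast_nonneg _)

lemma natCast_nonneg (hf : IsModulus f) (n : ℕ) : 0 ≤ f n := hf.1 _ (Nat.cast_nonneg _)

lemma natCast_pos (hf : IsModulus f) {n : ℕ} (hn : 0 < n) : 0 < f n :=
  (hf.natCast_nonneg n).lt_of_ne fun h =>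
    hn.ne' (Nat.cast_eq_zero.1 ((hf.2.1 _ (Nat.cast_nonneg _)).1 h.symm))

end IsModulus

theorem stmt8 (f : ℝ → ℝ) (hf : IsUnboundedModulus f) :
    ∃ g : ℕ → ℝ, IsWeight g ∧
      (∃ A : Set ℕ, A ∈ Zd f g ∧ A ∉ Zd f (fun n => (n : ℝ))) ∧
      (∃ B : Set ℕ, B ∈ Zd f (fun n => (n : ℝ)) ∧ B ∉ Zd f g) := by
  obtain ⟨hmod, htop⟩ := hf
  obtain ⟨D⟩ := BlockData.nonempty (φ := fun n : ℕ => f n) (htop.comp tendsto_natCast_atTop_atTop)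
  have hmono := hmod.monotone_natCast
  have hsub := hmod.natCast_add_le
  have hnn := hmod.natCast_nonneg
  have hpos : ∀ n : ℕ, 0 < n → 0 < f n := fun _ => hmod.natCast_pos
  refine ⟨fun n => D.weight n, D.isWeight, ⟨D.evenBlocks, ?_, ?_⟩, ⟨D.oddTails, ?_, ?_⟩⟩
  · exact D.tendsto_cnt_evenBlocks_div_weight hmono hnn
  · exact D.not_tendsto_cnt_evenBlocks_div hmono hsub hnn hpos
  · exact D.tendsto_cnt_oddTails_div hmono hsub hnn
  · exact D.not_tendsto_cnt_oddTails_div_weight hmono hpos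
end

section
/- For any sequence of integers (a_n), the set t^{f,g}_{(a_n)}(𝕋) = {x ∈ 𝕋 : a_n x → 0 f^g-statistically} is a subgroup of the circle group 𝕋 = ℝ/ℤ, and it is an F_{σδ} (hence Borel) subset of 𝕋 containing the classical characterized subgroup t_{(a_n)}(𝕋) = {x : a_n x → 0 in 𝕋}. -/
/-!
Sets of `f`-density zero of weight `g` form an ideal of `ℕ` containing every finite set: `f` is
monotone and subadditive, and `f (g n) → ∞`. Hence `t^{f,g}_{(a_n)}(𝕋)` is the set of `x` with
`a_n x → 0` along the dual filter, which is a subgroup containing `t_{(a_n)}(𝕋)`.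

For the Borel complexity put `A_k(x) = {n : ‖a_n x‖ > 1/(k+1)}`. Since the condition `n ∈ A_k(x)`
is open in `x`, the count `|A_k(x) ∩ [1, n]|` is lower semicontinuous in `x`, so each condition
`f |A_k(x) ∩ [1, n]| ≤ f (g n) / (j+1)` is closed; and `x ∈ t^{f,g}_{(a_n)}(𝕋)` iff for all `k, j`
it holds for all large `n`.
-/

open Filter Set

/-- The `f^g`-statistically characterized subgroup `t^{f,g}_{(a_n)}(𝕋)`. -/
noncomputable def statChar (f : ℝ → ℝ) (g : ℕ → ℝ) (a : ℕ → ℤ) :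
    Set (AddCircle (1 : ℝ)) :=
  {x | ∀ ε > 0, {n : ℕ | ε ≤ ‖(a n) • x‖} ∈ Zd f g}

/-- An arithmetic sequence: `a 0 = 1`, strictly increasing, `a n ∣ a (n+1)`,
and all ratios `q_n ≥ 2`. -/
def IsArith (a : ℕ → ℕ) : Prop :=
  a 0 = 1 ∧ StrictMono a ∧ (∀ n, a n ∣ a (n + 1)) ∧ (∀ n, 2 * a n ≤ a (n + 1))

/-- Canonical representation `x = Σ_{n≥1} c_n / a_n` with `0 ≤ c_n ≤ q_n - 1`
and `c_n < q_n - 1` infinitely often; here `q_n = a n / a (n-1)`. -/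
def IsCanonRep (a : ℕ → ℕ) (c : ℕ → ℕ) (x : AddCircle (1 : ℝ)) : Prop :=
  c 0 = 0 ∧ (∀ n, 1 ≤ n → c n ≤ a n / a (n - 1) - 1) ∧
  (∀ N, ∃ n, N ≤ n ∧ c n < a n / a (n - 1) - 1) ∧
  x = ((∑' n, (c n : ℝ) / (a n : ℝ) : ℝ) : AddCircle (1 : ℝ))

open Topology

section Modulus

variable {f : ℝ → ℝ}

lemma IsModulus.nonneg_nat (hf : IsModulus f) (m : ℕ) : 0 ≤ f m :=
  hf.1 _ m.cast_nonneg

lemma IsModulus.monotone_nat (hf : IsModulus f) : Monotone fun m : ℕ => f m :=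
  fun _ _ h => hf.2.2.2.1 _ _ (Nat.cast_nonneg _) (Nat.cast_le.2 h)

lemma IsModulus.le_add_nat (hf : IsModulus f) (m k : ℕ) : f ↑(m + k) ≤ f m + f k := by
  push_cast
  exact hf.2.2.1 _ _ m.cast_nonneg k.cast_nonneg

end Modulus

section Counting

lemma cnt_mono {A B : Set ℕ} (h : A ⊆ B) (n : ℕ) : cnt A n ≤ cnt B n :=
  Finset.card_le_card fun _ hm => by
    simp only [Finset.mem_filter] at hm ⊢
    exact ⟨hm.1, h hm.2⟩

lemma cnt_union_le (A B : Set ℕ) (n : ℕ) : cnt (A ∪ B) n ≤ cnt A n + cnt B n := by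
  classical
  simp only [cnt, Set.mem_union]
  rw [Finset.filter_or]
  exact Finset.card_union_le _ _

lemma cnt_le_ncard {A : Set ℕ} (hA : A.Finite) (n : ℕ) : cnt A n ≤ A.ncard := by
  classical
  rw [cnt, ← Set.ncard_coe_finset]
  exact Set.ncard_le_ncard (fun m hm => (Finset.mem_filter.1 hm).2) hA

lemma lowerSemicontinuous_cnt {X : Type*} [TopologicalSpace X] {A : X → Set ℕ}
    (hA : ∀ m, IsOpen {x | m ∈ A x}) (n : ℕ) : LowerSemicontinuous fun x => cnt (A x) n := by
  have hsum : (fun x => cnt (A x) n) =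
      fun x => ∑ m ∈ Finset.Icc 1 n, {x | m ∈ A x}.indicator 1 x := by
    ext x
    rw [cnt, Finset.card_filter]
    rfl
  rw [hsum]
  exact lowerSemicontinuous_sum fun m _ => (hA m).lowerSemicontinuous_indicator zero_le_one

end Counting

def IsFσδ {X : Type*} [TopologicalSpace X] (s : Set X) : Prop :=
  ∃ F : ℕ → ℕ → Set X, (∀ i j, IsClosed (F i j)) ∧ s = ⋂ i, ⋃ j, F i j

namespace IsFσδ

variable {X : Type*} [TopologicalSpace X]

lemma iInter {s : ℕ → Set X} (h : ∀ k, IsFσδ (s k)) : IsFσδ (⋂ k, s k) := by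
  choose F hF hs using h
  exact ⟨fun i => F i.unpair.1 i.unpair.2, fun i j => hF _ _ _,
    (iInter_congr hs).trans (Set.iInter_unpair fun k l => ⋃ j, F k l j).symm⟩

lemma measurableSet [MeasurableSpace X] [OpensMeasurableSpace X] {s : Set X} (h : IsFσδ s) :
    MeasurableSet s := by
  obtain ⟨F, hF, rfl⟩ := h
  exact .iInter fun i => .iUnion fun j => (hF i j).measurableSet

end IsFσδ

def tendstoZeroSubgroup {ι G : Type*} [AddCommGroup G] [TopologicalSpace G]
    [IsTopologicalAddGroup G] (l : Filter ι) (a : ι → ℤ) : AddSubgroup G where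
  carrier := {x | Tendsto (fun n => a n • x) l (𝓝 0)}
  zero_mem' := by simpa using tendsto_const_nhds
  add_mem' hx hy := by simpa [smul_add] using hx.add hy
  neg_mem' hx := by simpa using hx.neg

section DensityZero

variable {f : ℝ → ℝ} {g : ℕ → ℝ}

lemma mem_Zd_of_le (hf : IsModulus f) (hfg : Tendsto (fun n => f (g n)) atTop atTop)
    {A : Set ℕ} {u : ℕ → ℝ} (hle : ∀ n, f (cnt A n) ≤ u n)
    (hu : Tendsto (fun n => u n / f (g n)) atTop (𝓝 0)) : A ∈ Zd f g :=
  squeeze_zero' ((hfg.eventually_gt_atTop 0).mono fun _ h => div_nonneg (hf.nonneg_nat _) h.le)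
    ((hfg.eventually_gt_atTop 0).mono fun n h => div_le_div_of_nonneg_right (hle n) h.le) hu

lemma Zd.mono (hf : IsModulus f) (hfg : Tendsto (fun n => f (g n)) atTop atTop)
    {A B : Set ℕ} (h : A ⊆ B) (hB : B ∈ Zd f g) : A ∈ Zd f g :=
  mem_Zd_of_le hf hfg (fun n => hf.monotone_nat (cnt_mono h n)) hB

lemma Zd.union (hf : IsModulus f) (hfg : Tendsto (fun n => f (g n)) atTop atTop)
    {A B : Set ℕ} (hA : A ∈ Zd f g) (hB : B ∈ Zd f g) : A ∪ B ∈ Zd f g := by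
  refine mem_Zd_of_le hf hfg (u := fun n => f (cnt A n) + f (cnt B n)) (fun n => ?_)
    (by simpa only [add_div, add_zero] using hA.add hB)
  exact (hf.monotone_nat (cnt_union_le A B n)).trans (hf.le_add_nat _ _)

lemma Zd.of_finite (hf : IsModulus f) (hfg : Tendsto (fun n => f (g n)) atTop atTop)
    {A : Set ℕ} (hA : A.Finite) : A ∈ Zd f g :=
  mem_Zd_of_le hf hfg (fun n => hf.monotone_nat (cnt_le_ncard hA n))
    (tendsto_const_nhds.div_atTop hfg)

lemma mem_Zd_iff_eventually_le (hf : IsModulus f)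
    (hfg : Tendsto (fun n => f (g n)) atTop atTop) {A : Set ℕ} :
    A ∈ Zd f g ↔ ∀ j : ℕ, ∀ᶠ n in atTop, f (cnt A n) ≤ f (g n) / (j + 1) := by
  have hpos := hfg.eventually_gt_atTop 0
  constructor
  · intro h j
    filter_upwards [hpos, h.eventually (gt_mem_nhds (Nat.one_div_pos_of_nat (n := j)))]
      with n hn hlt
    rw [div_lt_iff₀ hn, one_div_mul_eq_div] at hlt
    exact hlt.le
  · intro h
    refine tendsto_order.2 ⟨fun b hb => ?_, fun ε hε => ?_⟩
    · filter_upwards [hpos] with n hn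
      exact hb.trans_le (div_nonneg (hf.nonneg_nat _) hn.le)
    · obtain ⟨j, hj⟩ := exists_nat_one_div_lt hε
      filter_upwards [hpos, h j] with n hn hle
      rw [div_lt_iff₀ hn]
      calc f (cnt A n) ≤ 1 / (j + 1) * f (g n) := by rwa [one_div_mul_eq_div]
        _ < ε * f (g n) := mul_lt_mul_of_pos_right hj hn

noncomputable def zdFilter (hf : IsModulus f) (hfg : Tendsto (fun n => f (g n)) atTop atTop) :
    Filter ℕ :=
  comk (· ∈ Zd f g) (Zd.of_finite hf hfg finite_empty) (fun _ hB _ h => Zd.mono hf hfg h hB)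
    fun _ hA _ hB => Zd.union hf hfg hA hB

lemma mem_zdFilter {hf : IsModulus f} {hfg : Tendsto (fun n => f (g n)) atTop atTop}
    {s : Set ℕ} : s ∈ zdFilter hf hfg ↔ sᶜ ∈ Zd f g :=
  Iff.rfl

lemma zdFilter_le_atTop (hf : IsModulus f) (hfg : Tendsto (fun n => f (g n)) atTop atTop) :
    zdFilter hf hfg ≤ atTop :=
  Nat.cofinite_eq_atTop ▸ fun _ hs => Zd.of_finite hf hfg hs

lemma isFσδ_setOf_mem_Zd {X : Type*} [TopologicalSpace X] (hf : IsModulus f)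
    (hfg : Tendsto (fun n => f (g n)) atTop atTop) {A : X → Set ℕ}
    (hA : ∀ m, IsOpen {x | m ∈ A x}) : IsFσδ {x | A x ∈ Zd f g} := by
  refine ⟨fun j N => ⋂ n ≥ N, {x | f (cnt (A x) n) ≤ f (g n) / (j + 1)}, fun j N => ?_, ?_⟩
  · exact isClosed_biInter fun n _ => ((continuous_of_discreteTopology.comp_lowerSemicontinuous
      (lowerSemicontinuous_cnt hA n) hf.monotone_nat).isClosed_preimage _)
  · ext x
    simp only [mem_ofPred_eq, mem_Zd_iff_eventually_le hf hfg, eventually_atTop, mem_iInter,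
      mem_iUnion]

lemma statChar_eq_setOf_tendsto (hf : IsModulus f) (hfg : Tendsto (fun n => f (g n)) atTop atTop)
    (a : ℕ → ℤ) :
    statChar f g a = {x | Tendsto (fun n => a n • x) (zdFilter hf hfg) (𝓝 0)} := by
  ext x
  simp [statChar, Metric.tendsto_nhds, Filter.Eventually, mem_zdFilter, compl_ofPred]

lemma statChar_eq_iInter (hf : IsModulus f) (hfg : Tendsto (fun n => f (g n)) atTop atTop)
    (a : ℕ → ℤ) :
    statChar f g a = ⋂ k : ℕ, {x | {n | 1 / ((k : ℝ) + 1) < ‖a n • x‖} ∈ Zd f g} := by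
  ext x
  simp [statChar_eq_setOf_tendsto hf hfg, Filter.Eventually, mem_zdFilter, compl_ofPred,
    Metric.nhds_basis_closedBall_inv_nat_succ.tendsto_right_iff]

end DensityZero

theorem stmt10 (f : ℝ → ℝ) (hf : IsUnboundedModulus f) (g : ℕ → ℝ) (hg : IsWeight g)
    (a : ℕ → ℤ) :
    (∃ H : AddSubgroup (AddCircle (1 : ℝ)),
        (H : Set (AddCircle (1 : ℝ))) = statChar f g a) ∧
    (∃ F : ℕ → ℕ → Set (AddCircle (1 : ℝ)), (∀ i j, IsClosed (F i j)) ∧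
        statChar f g a = ⋂ i, ⋃ j, F i j) ∧
    MeasurableSet (statChar f g a) ∧
    {x : AddCircle (1 : ℝ) | Tendsto (fun n => ‖(a n) • x‖) atTop (nhds 0)} ⊆
      statChar f g a := by
  have hfg : Tendsto (fun n => f (g n)) atTop atTop := hf.2.comp hg.2.1
  have hFσδ : IsFσδ (statChar f g a) := by
    rw [statChar_eq_iInter hf.1 hfg]
    exact IsFσδ.iInter fun k => isFσδ_setOf_mem_Zd hf.1 hfg fun m =>
      isOpen_lt continuous_const (continuous_zsmul (a m)).norm
  rw [statChar_eq_setOf_tendsto hf.1 hfg] at hFσδ ⊢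
  refine ⟨⟨tendstoZeroSubgroup _ a, rfl⟩, hFσδ, hFσδ.measurableSet, fun x hx => ?_⟩
  exact (tendsto_zero_iff_norm_tendsto_zero.2 hx).mono_left (zdFilter_le_atTop hf.1 hfg)
end

section
/- Let (a_n) be an arithmetic sequence with ratios q_n ≥ 2. Suppose x ∈ 𝕋 has canonical representation with supp(x) = ⋃_{r≥1} [n_{2r−1}, n_{2r}] for some sequence (n_r) with d^f_g({n_r : r ∈ ℕ}) = 0, and c_n = q_n − 1 for all n ∈ supp(x). Then x ∈ t^{f,g}_{(a_n)}(𝕋). -/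
open Filter Set

/-!
Multiplying `x = ∑ c m / a m` by `a n` kills the digits up to `n` modulo `1`, leaving
`a n · ∑_{m > n} c m / a m`. If the digits `c (n+1), …, c (n+k)` are all `0`, this lies in
`[0, a n / a (n+k)]`; if they are all maximal, the sum telescopes and it lies within
`a n / a (n+k) ≤ 2⁻ᵏ` of `1`. So `‖a n x‖ ≥ ε > 2⁻ᵏ` forces an endpoint `n_r` of a block of the
support into `(n, n+k]`; each `n_r` serves at most `k` such `n`, and subadditivity of `f`
transfers zero density from `{n_r}` to `{n : ‖a n x‖ ≥ ε}`.
-/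

open Topology

theorem IsModulus.map_nat_mul_le {f : ℝ → ℝ} (hf : IsModulus f) (j : ℕ) {y : ℝ} (hy : 0 ≤ y) :
    f (j * y) ≤ j * f y := by
  obtain ⟨-, hzero, hsub, -, -⟩ := hf
  induction j with
  | zero => simp [(hzero 0 le_rfl).2 rfl]
  | succ j ih =>
    calc f ((j + 1 : ℕ) * y) = f (j * y + y) := by push_cast; ring_nf
      _ ≤ f (j * y) + f y := hsub _ _ (by positivity) hy
      _ ≤ (j + 1 : ℕ) * f y := by push_cast; linarith

theorem IsModulus.mem_Zd_of_cnt_le {f : ℝ → ℝ} {g : ℕ → ℝ} (hf : IsModulus f)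
    (hfg : Tendsto (fun n => f (g n)) atTop atTop) {A B : Set ℕ} (hB : B ∈ Zd f g) (k C : ℕ)
    (hAB : ∀ n, cnt A n ≤ k * cnt B n + C) : A ∈ Zd f g := by
  have ⟨hnonneg, _, hsub, hmono, _⟩ := hf
  have hB' : Tendsto (fun n => f (cnt B n) / f (g n)) atTop (𝓝 0) := hB
  have hbound : Tendsto (fun n => k * (f (cnt B n) / f (g n)) + f C / f (g n)) atTop (𝓝 0) := by
    simpa using (hB'.const_mul (k : ℝ)).add (tendsto_const_nhds.div_atTop hfg)
  refine tendsto_of_tendsto_of_tendsto_of_le_of_le' tendsto_const_nhds hbound ?_ ?_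
  · filter_upwards [hfg.eventually_gt_atTop 0] with n hn
    exact div_nonneg (hnonneg _ (Nat.cast_nonneg _)) hn.le
  · filter_upwards [hfg.eventually_gt_atTop 0] with n hn
    rw [← mul_div_assoc, ← add_div]
    gcongr
    calc f (cnt A n) ≤ f (k * cnt B n + C) :=
          hmono _ _ (Nat.cast_nonneg _) (by exact_mod_cast hAB n)
      _ ≤ f (k * cnt B n) + f C := hsub _ _ (by positivity) (Nat.cast_nonneg _)
      _ ≤ k * f (cnt B n) + f C := by
          gcongr; exact hf.map_nat_mul_le k (Nat.cast_nonneg _)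

theorem cnt_add_le (B : Set ℕ) (n k : ℕ) : cnt B (n + k) ≤ cnt B n + k := by
  classical
  unfold cnt
  calc ((Finset.Icc 1 (n + k)).filter (· ∈ B)).card
      ≤ (((Finset.Icc 1 n).filter (· ∈ B)) ∪ Finset.Ioc n (n + k)).card := by
        refine Finset.card_le_card fun m hm => ?_
        simp only [Finset.mem_filter, Finset.mem_Icc, Finset.mem_union, Finset.mem_Ioc] at hm ⊢
        rcases le_or_gt m n with hmn | hmn
        · exact .inl ⟨⟨hm.1.1, hmn⟩, hm.2⟩
        · exact .inr ⟨hmn, hm.1.2⟩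
    _ ≤ ((Finset.Icc 1 n).filter (· ∈ B)).card + k := by
        simpa using Finset.card_union_le _ (Finset.Ioc n (n + k))

theorem cnt_le_cnt_add_mul {A B : Set ℕ} {k : ℕ}
    (hAB : ∀ j ∈ A, (B ∩ Ioc j (j + k)).Nonempty) (n : ℕ) :
    cnt A n ≤ cnt B (n + k) * k := by
  classical
  unfold cnt
  refine (Finset.card_le_card fun j hj => ?_).trans
    (Finset.card_biUnion_le_card_mul _ (fun b => Finset.Ico (b - k) b) k fun b _ => ?_)
  · simp only [Finset.mem_filter, Finset.mem_Icc] at hj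
    obtain ⟨b, hbB, hjb, hbj⟩ := hAB j hj.2
    simp only [Finset.mem_biUnion, Finset.mem_filter, Finset.mem_Icc, Finset.mem_Ico]
    exact ⟨b, ⟨⟨by omega, by omega⟩, hbB⟩, by omega, hjb⟩
  · simp only [Nat.card_Ico]; omega

theorem cnt_le_of_forall_inter_Ioc_nonempty {A B : Set ℕ} {k : ℕ}
    (hAB : ∀ j ∈ A, (B ∩ Ioc j (j + k)).Nonempty) (n : ℕ) :
    cnt A n ≤ k * cnt B n + k * k :=
  calc cnt A n ≤ cnt B (n + k) * k := cnt_le_cnt_add_mul hAB n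
    _ ≤ (cnt B n + k) * k := Nat.mul_le_mul_right k (cnt_add_le B n k)
    _ = k * cnt B n + k * k := by ring

theorem forall_Ioc_mem_or_forall_Ioc_notMem {P : Set ℕ} {j k : ℕ}
    (hP : ∀ m, j < m → m < j + k → (m ∈ P ↔ m + 1 ∈ P)) :
    (∀ m ∈ Ioc j (j + k), m ∈ P) ∨ (∀ m ∈ Ioc j (j + k), m ∉ P) := by
  have hconst : ∀ i, i < k → (j + 1 + i ∈ P ↔ j + 1 ∈ P) := by
    intro i
    induction i with
    | zero => simp
    | succ i ih => intro hi; rw [← ih (by omega), hP (j + 1 + i) (by omega) (by omega)]; rfl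
  have hIoc : ∀ m ∈ Ioc j (j + k), (m ∈ P ↔ j + 1 ∈ P) := fun m ⟨hjm, hmk⟩ => by
    simpa [show j + 1 + (m - (j + 1)) = m by omega] using hconst (m - (j + 1)) (by omega)
  by_cases hj : j + 1 ∈ P
  · exact .inl fun m hm => (hIoc m hm).2 hj
  · exact .inr fun m hm => mt (hIoc m hm).1 hj

theorem mem_range_or_add_one_mem_range_of_not_iff {s : ℕ → ℕ} {m : ℕ}
    (h : ¬ (m ∈ ⋃ r, Icc (s (2 * r)) (s (2 * r + 1)) ↔
      m + 1 ∈ ⋃ r, Icc (s (2 * r)) (s (2 * r + 1)))) :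
    m ∈ range s ∨ m + 1 ∈ range s := by
  simp only [mem_iUnion, mem_Icc] at h
  by_cases hm : ∃ r, s (2 * r) ≤ m ∧ m ≤ s (2 * r + 1)
  · obtain ⟨r, hr₁, hr₂⟩ := hm
    refine .inl ⟨2 * r + 1, ?_⟩
    by_contra hne
    exact h ⟨fun _ => ⟨r, by omega, by omega⟩, fun _ => ⟨r, hr₁, hr₂⟩⟩
  · obtain ⟨r, hr₁, hr₂⟩ := (not_iff.1 h).1 hm
    refine .inr ⟨2 * r, ?_⟩
    by_contra hne
    exact hm ⟨r, by omega, by omega⟩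

theorem forall_Ioc_mem_or_forall_Ioc_notMem_iUnion_Icc {s : ℕ → ℕ} {j k : ℕ}
    (hs : ¬ (range s ∩ Ioc j (j + k)).Nonempty) :
    (∀ m ∈ Ioc j (j + k), m ∈ ⋃ r, Icc (s (2 * r)) (s (2 * r + 1))) ∨
      (∀ m ∈ Ioc j (j + k), m ∉ ⋃ r, Icc (s (2 * r)) (s (2 * r + 1))) := by
  refine forall_Ioc_mem_or_forall_Ioc_notMem fun m hjm hmk => ?_
  by_contra h
  rcases mem_range_or_add_one_mem_range_of_not_iff h with hm | hm
  · exact hs ⟨m, hm, hjm, hmk.le⟩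
  · exact hs ⟨m + 1, hm, by omega, hmk⟩

theorem sum_range_le_of_le_sub {u b : ℕ → ℝ} (hb : ∀ p, 0 ≤ b p)
    (hub : ∀ p, u (p + 1) ≤ b p - b (p + 1)) (n M : ℕ) :
    ∑ m ∈ Finset.range M, u (m + (n + 1)) ≤ b n :=
  calc ∑ m ∈ Finset.range M, u (m + (n + 1))
      ≤ ∑ m ∈ Finset.range M, (b (n + m) - b (n + (m + 1))) :=
        Finset.sum_le_sum fun m _ => by
          simpa only [add_comm, add_left_comm, add_assoc] using hub (n + m)
    _ = b n - b (n + M) := Finset.sum_range_sub' (fun i => b (n + i)) M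
    _ ≤ b n := sub_le_self _ (hb _)

theorem AddCircle.norm_coe_one_le_abs (r : ℝ) : ‖(r : AddCircle (1 : ℝ))‖ ≤ |r| := by
  rw [AddCircle.norm_eq, inv_one, one_mul, mul_one]
  simpa using round_le r 0

def AdmissibleDigits (a c : ℕ → ℕ) : Prop :=
  ∀ n, 1 ≤ n → c n ≤ a n / a (n - 1) - 1

noncomputable def expansionTail (a c : ℕ → ℕ) (n : ℕ) : ℝ :=
  ∑' m, (c (m + (n + 1)) : ℝ) / a (m + (n + 1))

namespace IsArith

variable {a c : ℕ → ℕ}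

theorem pos (ha : IsArith a) (n : ℕ) : 0 < a n :=
  lt_of_lt_of_le (ha.1 ▸ Nat.one_pos) (ha.2.1.monotone (Nat.zero_le n))

theorem dvd_of_le (ha : IsArith a) {m n : ℕ} (hmn : m ≤ n) : a m ∣ a n := by
  induction n, hmn using Nat.le_induction with
  | base => exact dvd_rfl
  | succ n _ ih => exact ih.trans (ha.2.2.1 n)

theorem div_le_half_pow (ha : IsArith a) (n k : ℕ) : (a n : ℝ) / a (n + k) ≤ (1 / 2) ^ k := by
  have hgrow : a n * 2 ^ k ≤ a (n + k) := by
    induction k with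
    | zero => simp
    | succ k ih => rw [pow_succ, ← mul_assoc, ← add_assoc]; linarith [ha.2.2.2 (n + k)]
  rw [div_le_iff₀ (by exact_mod_cast ha.pos _), one_div, inv_pow, ← div_eq_inv_mul,
    le_div_iff₀ (by positivity)]
  exact_mod_cast hgrow

theorem maxDigit_div_eq (ha : IsArith a) (p : ℕ) :
    ((a (p + 1) / a p - 1 : ℕ) : ℝ) / a (p + 1) = 1 / a p - 1 / a (p + 1) := by
  obtain ⟨q, hq⟩ := ha.2.2.1 p
  have hp := ha.pos p
  have hq₁ : 1 ≤ q := Nat.pos_of_ne_zero fun h => by simpa [h, hq] using ha.pos (p + 1)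
  rw [hq, Nat.mul_div_cancel_left q hp, Nat.cast_sub hq₁]
  push_cast
  field_simp

theorem digit_div_le (ha : IsArith a) (hdigit : AdmissibleDigits a c) (p : ℕ) :
    (c (p + 1) : ℝ) / a (p + 1) ≤ 1 / a p - 1 / a (p + 1) := by
  rw [← ha.maxDigit_div_eq p]
  gcongr
  exact_mod_cast hdigit (p + 1) (Nat.le_add_left 1 p)

theorem summable_digit_div (ha : IsArith a) (hdigit : AdmissibleDigits a c) :
    Summable fun m => (c m : ℝ) / a m := by
  rw [← summable_nat_add_iff (0 + 1)]
  exact summable_of_sum_range_le (fun _ => by positivity)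
    (sum_range_le_of_le_sub (u := fun m => (c m : ℝ) / a m) (b := fun p => 1 / (a p : ℝ))
      (fun _ => by positivity) (ha.digit_div_le hdigit) 0)

theorem expansionTail_le (ha : IsArith a) (hdigit : AdmissibleDigits a c)
    (n : ℕ) : expansionTail a c n ≤ 1 / a n :=
  Real.tsum_le_of_sum_range_le (fun _ => by positivity)
    (sum_range_le_of_le_sub (u := fun m => (c m : ℝ) / a m) (b := fun p => 1 / (a p : ℝ))
      (fun _ => by positivity) (ha.digit_div_le hdigit) n)

theorem expansionTail_eq_sum_add (ha : IsArith a) (hdigit : AdmissibleDigits a c)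
    (n k : ℕ) :
    expansionTail a c n =
      ∑ i ∈ Finset.range k, (c (i + (n + 1)) : ℝ) / a (i + (n + 1)) +
        expansionTail a c (n + k) := by
  rw [expansionTail, ← ((summable_nat_add_iff (n + 1)).2
    (ha.summable_digit_div hdigit)).sum_add_tsum_nat_add k, expansionTail]
  simp only [add_assoc, add_left_comm k]

theorem expansionTail_eq_of_forall_Ioc_eq_zero (ha : IsArith a)
    (hdigit : AdmissibleDigits a c) {n k : ℕ}
    (hzero : ∀ m ∈ Ioc n (n + k), c m = 0) :
    expansionTail a c n = expansionTail a c (n + k) := by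
  rw [ha.expansionTail_eq_sum_add hdigit n k, Finset.sum_eq_zero, zero_add]
  intro i hi
  rw [hzero _ ⟨by omega, by have := Finset.mem_range.1 hi; omega⟩, Nat.cast_zero, zero_div]

theorem expansionTail_eq_of_forall_Ioc_eq_maxDigit (ha : IsArith a)
    (hdigit : AdmissibleDigits a c) {n k : ℕ}
    (hmax : ∀ m ∈ Ioc n (n + k), c m = a m / a (m - 1) - 1) :
    expansionTail a c n = 1 / a n - 1 / a (n + k) + expansionTail a c (n + k) := by
  rw [ha.expansionTail_eq_sum_add hdigit n k]
  congr 1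
  calc ∑ i ∈ Finset.range k, (c (i + (n + 1)) : ℝ) / a (i + (n + 1))
      = ∑ i ∈ Finset.range k, (1 / (a (n + i) : ℝ) - 1 / a (n + (i + 1))) := by
        refine Finset.sum_congr rfl fun i hi => ?_
        rw [Finset.mem_range] at hi
        rw [hmax _ ⟨by omega, by omega⟩, show i + (n + 1) = n + i + 1 by omega,
          Nat.add_sub_cancel, ha.maxDigit_div_eq]
        rfl
    _ = 1 / a n - 1 / a (n + k) := Finset.sum_range_sub' (fun i => 1 / (a (n + i) : ℝ)) k

theorem zsmul_coe_tsum_eq (ha : IsArith a) (hdigit : AdmissibleDigits a c)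
    (n : ℕ) : (a n : ℤ) • ((∑' m, (c m : ℝ) / a m : ℝ) : AddCircle (1 : ℝ)) =
      ((a n * expansionTail a c n : ℝ) : AddCircle (1 : ℝ)) := by
  have hhead : (a n : ℝ) * ∑ m ∈ Finset.range (n + 1), (c m : ℝ) / a m =
      ((∑ m ∈ Finset.range (n + 1), c m * (a n / a m) : ℕ) : ℝ) := by
    push_cast [Finset.mul_sum]
    refine Finset.sum_congr rfl fun m hm => ?_
    rw [Nat.cast_div (ha.dvd_of_le (Finset.mem_range_succ_iff.1 hm))
      (by exact_mod_cast (ha.pos m).ne')]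
    field_simp
  rw [← AddCircle.coe_zsmul, zsmul_eq_mul, Int.cast_natCast,
    ← (ha.summable_digit_div hdigit).sum_add_tsum_nat_add (n + 1), mul_add, hhead,
    AddCircle.coe_add, ← nsmul_one, AddCircle.coe_nsmul, AddCircle.coe_period, nsmul_zero,
    zero_add]
  rfl

theorem norm_zsmul_le_half_pow (ha : IsArith a) (hdigit : AdmissibleDigits a c)
    {n k : ℕ} (hblock : (∀ m ∈ Ioc n (n + k), c m = 0) ∨
      ∀ m ∈ Ioc n (n + k), c m = a m / a (m - 1) - 1) :
    ‖(a n : ℤ) • ((∑' m, (c m : ℝ) / a m : ℝ) : AddCircle (1 : ℝ))‖ ≤ (1 / 2) ^ k := by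
  have han : (0 : ℝ) < a n := by exact_mod_cast ha.pos n
  have hnk : (0 : ℝ) < a (n + k) := by exact_mod_cast ha.pos (n + k)
  set t := expansionTail a c (n + k)
  have ht₀ : 0 ≤ a n * t := mul_nonneg han.le (tsum_nonneg fun _ => by positivity)
  have ht₁ : a n * t ≤ a n / a (n + k) :=
    (mul_le_mul_of_nonneg_left (ha.expansionTail_le hdigit (n + k)) han.le).trans_eq
      (mul_one_div _ _)
  have hδ := ha.div_le_half_pow n k
  rw [ha.zsmul_coe_tsum_eq hdigit]
  rcases hblock with hzero | hmax
  · rw [ha.expansionTail_eq_of_forall_Ioc_eq_zero hdigit hzero]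
    exact (AddCircle.norm_coe_one_le_abs _).trans ((abs_of_nonneg ht₀).trans_le (ht₁.trans hδ))
  · rw [ha.expansionTail_eq_of_forall_Ioc_eq_maxDigit hdigit hmax,
      show a n * (1 / a n - 1 / a (n + k) + t) = 1 + (a n * t - a n / a (n + k)) by
        field_simp; ring,
      AddCircle.coe_add, AddCircle.coe_period, zero_add]
    refine (AddCircle.norm_coe_one_le_abs _).trans (abs_le.2 ⟨?_, by linarith⟩)
    linarith [div_nonneg han.le hnk.le]

end IsArith

theorem stmt12_general (f : ℝ → ℝ) (hf : IsUnboundedModulus f) (g : ℕ → ℝ) (hg : IsWeight g)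
    (a : ℕ → ℕ) (ha : IsArith a) (x : AddCircle (1 : ℝ)) (c : ℕ → ℕ)
    (hx : IsCanonRep a c x) (nn : ℕ → ℕ)
    (hzero : Set.range nn ∈ Zd f g)
    (hsupp : {m | c m ≠ 0} = ⋃ r : ℕ, Set.Icc (nn (2 * r)) (nn (2 * r + 1)))
    (hc : ∀ m, c m ≠ 0 → c m = a m / a (m - 1) - 1) :
    x ∈ statChar f g (fun n => (a n : ℤ)) := by
  obtain ⟨-, hdigit, -, rfl⟩ := hx
  intro ε hε
  obtain ⟨k, hk⟩ := exists_pow_lt_of_lt_one hε (by norm_num : (1 / 2 : ℝ) < 1)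
  refine hf.1.mem_Zd_of_cnt_le (hf.2.comp hg.2.1) hzero k (k * k)
    (cnt_le_of_forall_inter_Ioc_nonempty fun j hj => ?_)
  by_contra hempty
  have hblock := forall_Ioc_mem_or_forall_Ioc_notMem_iUnion_Icc hempty
  rw [← hsupp] at hblock
  refine (lt_of_lt_of_le hk hj).not_ge (ha.norm_zsmul_le_half_pow hdigit ?_)
  rcases hblock with hsupport | hgap
  · exact .inr fun m hm => hc m (hsupport m hm)
  · exact .inl fun m hm => not_not.1 (hgap m hm)

theorem stmt12 (f : ℝ → ℝ) (hf : IsUnboundedModulus f) (g : ℕ → ℝ) (hg : IsWeight g)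
    (a : ℕ → ℕ) (ha : IsArith a) (x : AddCircle (1 : ℝ)) (c : ℕ → ℕ)
    (hx : IsCanonRep a c x) (nn : ℕ → ℕ) (hnn : StrictMono nn)
    (hzero : Set.range nn ∈ Zd f g)
    (hsupp : {m | c m ≠ 0} = ⋃ r : ℕ, Set.Icc (nn (2 * r)) (nn (2 * r + 1)))
    (hc : ∀ m, c m ≠ 0 → c m = a m / a (m - 1) - 1) :
    x ∈ statChar f g (fun n => (a n : ℤ)) :=
  stmt12_general f hf g hg a ha x c hx nn hzero hsupp hc
end
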